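/- arXiv:2602.05835 — 3 statements merged into one kernel-verified Lean document; each statement's English description precedes it below -/
import Mathlib

section
/- Fix c ∈ (0, 1/2), an integer m ≥ 1, and μ₁, μ₂ ∈ [0,1] with μ₂ ≥ μ₁ + c. Let f : {0,1}^m → [0, m] be coordinatewise non-decreasing with f(0,…,0) = 0 < f(1,…,1). Let r⁽¹⁾ and r⁽²⁾ be random vectors with i.i.d. Bernoulli(μ₁) and Bernoulli(μ₂) coordinates respectively. Then E[f(r⁽²⁾)] − E[f(r⁽¹⁾)] ≥ c^{2m} · (f(1,…,1) − f(0,…,0)). -/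
/-!
Couple the two product measures coordinatewise: in each coordinate draw (a, b) with
P(1,1) = μ₁, P(0,1) = μ₂ - μ₁, P(0,0) = 1 - μ₂, so that a ~ Bernoulli(μ₁), b ~ Bernoulli(μ₂)
and a ≤ b. The expectation gap is then the expectation of f(b) - f(a) under the coupling, a sum
of nonnegative terms by monotonicity, and the single term a = 0, b = 1 already contributes
(μ₂ - μ₁)^m (f 1 - f 0) ≥ c^(2m) (f 1 - f 0).
-/

open MeasureTheory Finset

set_option linter.deprecated false

section ProductWeights

variable {ι α : Type*} [Fintype ι] [DecidableEq ι] [Fintype α]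

theorem integral_pi_toMeasure_eq_sum [MeasurableSpace α] [MeasurableSingletonClass α]
    (p : ι → PMF α) (f : (ι → α) → ℝ) :
    ∫ x, f x ∂Measure.pi (fun i => (p i).toMeasure) = ∑ x, (∏ i, (p i (x i)).toReal) * f x := by
  rw [integral_fintype .of_finite]
  refine Fintype.sum_congr _ _ fun x => ?_
  simp [measureReal_def, PMF.toMeasure_apply_singleton _ _ (measurableSet_singleton _),
    ENNReal.toReal_prod]

theorem sum_marginal_mul_sub_sum_marginal_mul (q : α → α → ℝ) (f : (ι → α) → ℝ) :
    ∑ b, (∏ i, ∑ a, q a (b i)) * f b - ∑ a, (∏ i, ∑ b, q (a i) b) * f a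
      = ∑ a, ∑ b, (∏ i, q (a i) (b i)) * (f b - f a) := by
  simp only [Fintype.prod_sum, Finset.sum_mul, mul_sub, Finset.sum_sub_distrib]
  exact congrArg (· - _) Finset.sum_comm

/-- The product coupling only charges pairs a ≤ b, where the increments of f are nonnegative. -/
theorem prod_mul_sub_le_sum_marginal_mul_sub [Preorder α] (q : α → α → ℝ)
    (hq_nonneg : ∀ a b, 0 ≤ q a b) (hq_le : ∀ a b, q a b ≠ 0 → a ≤ b)
    {f : (ι → α) → ℝ} (hf : Monotone f) (a₀ b₀ : ι → α) :
    (∏ i, q (a₀ i) (b₀ i)) * (f b₀ - f a₀)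
      ≤ ∑ b, (∏ i, ∑ a, q a (b i)) * f b - ∑ a, (∏ i, ∑ b, q (a i) b) * f a := by
  have hterm : ∀ a b : ι → α, 0 ≤ (∏ i, q (a i) (b i)) * (f b - f a) := by
    intro a b
    by_cases hab : a ≤ b
    · exact mul_nonneg (prod_nonneg fun i _ => hq_nonneg _ _) (sub_nonneg.2 (hf hab))
    · obtain ⟨i, hi⟩ := Pi.le_def.not.1 hab |> not_forall.1
      rw [prod_eq_zero (mem_univ i) (by_contra fun h => hi (hq_le _ _ h)), zero_mul]
  rw [sum_marginal_mul_sub_sum_marginal_mul]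
  calc (∏ i, q (a₀ i) (b₀ i)) * (f b₀ - f a₀)
      ≤ ∑ b, (∏ i, q (a₀ i) (b i)) * (f b - f a₀) :=
        single_le_sum (f := fun b => (∏ i, q (a₀ i) (b i)) * (f b - f a₀))
          (fun b _ => hterm a₀ b) (mem_univ b₀)
    _ ≤ ∑ a, ∑ b, (∏ i, q (a i) (b i)) * (f b - f a) :=
        single_le_sum (f := fun a => ∑ b, (∏ i, q (a i) (b i)) * (f b - f a))
          (fun a _ => sum_nonneg fun b _ => hterm a b) (mem_univ a₀)

end ProductWeights

/-- Joint weights of the monotone coupling of Bernoulli(μ₁) and Bernoulli(μ₂). -/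
def bernoulliCoupling (μ₁ μ₂ : ℝ) : Bool → Bool → ℝ
  | true, true => μ₁
  | true, false => 0
  | false, true => μ₂ - μ₁
  | false, false => 1 - μ₂

theorem bernoulliCoupling_nonneg {μ₁ μ₂ : ℝ} (h₁ : 0 ≤ μ₁) (h₁₂ : μ₁ ≤ μ₂) (h₂ : μ₂ ≤ 1)
    (a b : Bool) : 0 ≤ bernoulliCoupling μ₁ μ₂ a b := by
  cases a <;> cases b <;> simp only [bernoulliCoupling] <;> linarith

theorem le_of_bernoulliCoupling_ne_zero {μ₁ μ₂ : ℝ} {a b : Bool}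
    (h : bernoulliCoupling μ₁ μ₂ a b ≠ 0) : a ≤ b := by
  cases a <;> cases b <;> simp_all [bernoulliCoupling]

theorem sum_bernoulliCoupling_right (μ₁ μ₂ : ℝ) (a : Bool) :
    ∑ b, bernoulliCoupling μ₁ μ₂ a b = if a then μ₁ else 1 - μ₁ := by
  cases a <;> simp [bernoulliCoupling]

theorem sum_bernoulliCoupling_left (μ₁ μ₂ : ℝ) (b : Bool) :
    ∑ a, bernoulliCoupling μ₁ μ₂ a b = if b then μ₂ else 1 - μ₂ := by
  cases b <;> simp [bernoulliCoupling]

theorem PMF.bernoulli_toNNReal_apply_toReal {μ : ℝ} (h₀ : 0 ≤ μ) (h₁ : μ ≤ 1) (b : Bool) :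
    (PMF.bernoulli μ.toNNReal (Real.toNNReal_le_one.mpr h₁) b).toReal
      = if b then μ else 1 - μ := by
  cases b <;> simp [PMF.bernoulli_apply, h₀, h₁]

theorem stmt_5_general (m : ℕ) (c μ₁ μ₂ : ℝ) (hc : c ∈ Set.Ioo (0 : ℝ) (1 / 2))
    (h₁ : μ₁ ∈ Set.Icc (0 : ℝ) 1) (h₂ : μ₂ ∈ Set.Icc (0 : ℝ) 1) (hgap : μ₂ ≥ μ₁ + c)
    (f : (Fin m → Bool) → ℝ) (hmono : Monotone f) :
    (∫ r, f r ∂(Measure.pi (fun _ : Fin m =>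
        (PMF.bernoulli (Real.toNNReal μ₂)
          (Real.toNNReal_le_one.mpr h₂.2)).toMeasure)))
      - (∫ r, f r ∂(Measure.pi (fun _ : Fin m =>
        (PMF.bernoulli (Real.toNNReal μ₁)
          (Real.toNNReal_le_one.mpr h₁.2)).toMeasure)))
      ≥ c ^ (2 * m) * (f (fun _ => true) - f (fun _ => false)) := by
  obtain ⟨hc₀, hc₁⟩ := hc
  have hgap_le : c ^ (2 * m) ≤ ∏ _ : Fin m, bernoulliCoupling μ₁ μ₂ false true := by
    rw [prod_const, card_univ, Fintype.card_fin, bernoulliCoupling]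
    calc c ^ (2 * m) ≤ c ^ m := pow_le_pow_of_le_one hc₀.le (by linarith) (by omega)
      _ ≤ (μ₂ - μ₁) ^ m := pow_le_pow_left₀ hc₀.le (by linarith) m
  have hcoupling := prod_mul_sub_le_sum_marginal_mul_sub (bernoulliCoupling μ₁ μ₂)
    (bernoulliCoupling_nonneg h₁.1 (by linarith) h₂.2) (fun _ _ => le_of_bernoulliCoupling_ne_zero)
    hmono (fun _ => false) (fun _ => true)
  simp only [sum_bernoulliCoupling_left, sum_bernoulliCoupling_right] at hcoupling
  rw [integral_pi_toMeasure_eq_sum, integral_pi_toMeasure_eq_sum]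
  simp only [PMF.bernoulli_toNNReal_apply_toReal h₁.1 h₁.2,
    PMF.bernoulli_toNNReal_apply_toReal h₂.1 h₂.2]
  exact le_trans (mul_le_mul_of_nonneg_right hgap_le
    (sub_nonneg.2 (hmono fun _ => Bool.false_le _))) hcoupling

theorem stmt_5 (m : ℕ) (hm : 1 ≤ m) (c μ₁ μ₂ : ℝ) (hc : c ∈ Set.Ioo (0 : ℝ) (1 / 2))
    (h₁ : μ₁ ∈ Set.Icc (0 : ℝ) 1) (h₂ : μ₂ ∈ Set.Icc (0 : ℝ) 1) (hgap : μ₂ ≥ μ₁ + c)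
    (f : (Fin m → Bool) → ℝ) (hmono : Monotone f)
    (hrange : ∀ x, f x ∈ Set.Icc (0 : ℝ) m)
    (hbot : f (fun _ => false) = 0) (htop : 0 < f (fun _ => true)) :
    (∫ r, f r ∂(Measure.pi (fun _ : Fin m =>
        (PMF.bernoulli (Real.toNNReal μ₂)
          (Real.toNNReal_le_one.mpr h₂.2)).toMeasure)))
      - (∫ r, f r ∂(Measure.pi (fun _ : Fin m =>
        (PMF.bernoulli (Real.toNNReal μ₁)
          (Real.toNNReal_le_one.mpr h₁.2)).toMeasure)))
      ≥ c ^ (2 * m) * (f (fun _ => true) - f (fun _ => false)) :=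
  stmt_5_general m c μ₁ μ₂ hc h₁ h₂ hgap f hmono
end

section
/- Fix m ≥ 1, reals x₁,…,x_m, x′₁,…,x′_m ∈ [0,1] with x′_i > x_i for all i, a value F > 0, and cost c > 0. Define u recursively by u(x_m) = −c + x_m·F and u(x_i,…,x_m) = −c + x_i·u(x_{i+1},…,x_m). If u(x_1,…,x_m) ≥ 0, then u(x_i,…,x_m) > 0 for all i ≥ 2, and u(x′_1,…,x′_m) > u(x_1,…,x_m). -/
/-!
Since `u(x :: xs) = -c + x * u(xs)` with `c > 0` and `x ≥ 0`, a non-negative utility forces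
`x * u(xs) ≥ c > 0`, hence `u(xs) > 0`; inductively every proper tail has positive utility.
Because the continuation values are positive, `x * u(xs) < x' * u(xs) ≤ x' * u(xs')`
at every round, by induction along the list.
-/

/-- Expected utility of the "play-while-winning" policy: pay cost `c` each
round, continue only on success, obtain terminal score `F` after all
successes. `utilRec c F [x_i, …, x_m] = -c + x_i * utilRec c F [x_{i+1}, …, x_m]`,
with `utilRec c F [] = F`. -/
def utilRec (c F : ℝ) : List ℝ → ℝ
  | [] => F
  | x :: xs => -c + x * utilRec c F xs

section utilRec

variable {c F x x' : ℝ} {xs xs' : List ℝ}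

lemma utilRec_pos_of_cons_nonneg (hc : 0 < c) (hx : 0 ≤ x)
    (h : 0 ≤ utilRec c F (x :: xs)) : 0 < utilRec c F xs := by
  by_contra! hle
  have : x * utilRec c F xs ≤ 0 := mul_nonpos_of_nonneg_of_nonpos hx hle
  simp only [utilRec] at h
  linarith

lemma utilRec_drop_succ_pos (hc : 0 < c) (hF : 0 < F) (hxs : ∀ x ∈ xs, 0 ≤ x)
    (h : 0 ≤ utilRec c F xs) (k : ℕ) : 0 < utilRec c F (xs.drop (k + 1)) := by
  induction xs generalizing k with
  | nil => simpa [utilRec] using hF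
  | cons x t ih =>
    have htail : 0 < utilRec c F t :=
      utilRec_pos_of_cons_nonneg hc (hxs x List.mem_cons_self) h
    cases k with
    | zero => simpa using htail
    | succ k =>
      simpa using ih (fun y hy => hxs y (List.mem_cons_of_mem x hy)) htail.le k

lemma utilRec_le_of_forall₂_le (hc : 0 < c) (hle : List.Forall₂ (· ≤ ·) xs xs')
    (hxs : ∀ x ∈ xs, 0 ≤ x) (h : 0 ≤ utilRec c F xs) : utilRec c F xs ≤ utilRec c F xs' := by
  induction hle with
  | nil => rfl
  | @cons x x' t t' hxx _ ih =>
    have hx : 0 ≤ x := hxs x List.mem_cons_self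
    have htail : 0 < utilRec c F t := utilRec_pos_of_cons_nonneg hc hx h
    have ht : utilRec c F t ≤ utilRec c F t' :=
      ih (fun y hy => hxs y (List.mem_cons_of_mem x hy)) htail.le
    simp only [utilRec]
    calc -c + x * utilRec c F t ≤ -c + x' * utilRec c F t := by gcongr
      _ ≤ -c + x' * utilRec c F t' := by gcongr; linarith

lemma utilRec_cons_lt_cons (hc : 0 < c) (hx : x < x') (hle : List.Forall₂ (· ≤ ·) xs xs')
    (hxs : ∀ y ∈ x :: xs, 0 ≤ y) (h : 0 ≤ utilRec c F (x :: xs)) :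
    utilRec c F (x :: xs) < utilRec c F (x' :: xs') := by
  have hx₀ : 0 ≤ x := hxs x List.mem_cons_self
  have htail : 0 < utilRec c F xs := utilRec_pos_of_cons_nonneg hc hx₀ h
  have ht : utilRec c F xs ≤ utilRec c F xs' :=
    utilRec_le_of_forall₂_le hc hle (fun y hy => hxs y (List.mem_cons_of_mem x hy)) htail.le
  simp only [utilRec]
  calc -c + x * utilRec c F xs < -c + x' * utilRec c F xs := by gcongr
    _ ≤ -c + x' * utilRec c F xs' := by gcongr; linarith

end utilRec

theorem stmt_11_general (m : ℕ) (hm : 1 ≤ m) (c F : ℝ) (hc : 0 < c) (hF : 0 < F)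
    (xs xs' : List ℝ) (hlen : xs.length = m)
    (hmem : ∀ x ∈ xs, x ∈ Set.Icc (0 : ℝ) 1)
    (hlt : List.Forall₂ (· < ·) xs xs')
    (hnn : 0 ≤ utilRec c F xs) :
    (∀ i : ℕ, 2 ≤ i → i ≤ m → 0 < utilRec c F (xs.drop (i - 1)))
    ∧ utilRec c F xs < utilRec c F xs' := by
  have hxs : ∀ x ∈ xs, 0 ≤ x := fun x hx => (hmem x hx).1
  refine ⟨fun i hi _ => ?_, ?_⟩
  · obtain ⟨k, rfl⟩ : ∃ k, i = k + 2 := ⟨i - 2, by omega⟩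
    exact utilRec_drop_succ_pos hc hF hxs hnn k
  · cases hlt with
    | nil => simp at hlen; omega
    | cons hx htail => exact utilRec_cons_lt_cons hc hx (htail.imp fun _ _ => le_of_lt) hxs hnn

theorem stmt_11 (m : ℕ) (hm : 1 ≤ m) (c F : ℝ) (hc : 0 < c) (hF : 0 < F)
    (xs xs' : List ℝ) (hlen : xs.length = m)
    (hmem : ∀ x ∈ xs, x ∈ Set.Icc (0 : ℝ) 1)
    (hmem' : ∀ x ∈ xs', x ∈ Set.Icc (0 : ℝ) 1)
    (hlt : List.Forall₂ (· < ·) xs xs')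
    (hnn : 0 ≤ utilRec c F xs) :
    (∀ i : ℕ, 2 ≤ i → i ≤ m → 0 < utilRec c F (xs.drop (i - 1)))
    ∧ utilRec c F xs < utilRec c F xs' :=
  stmt_11_general m hm c F hc hF xs xs' hlen hmem hlt hnn
end

section
/- Let γ₁, γ₂ ∈ (0,1) with γ₁ > γ₂, let γ₁⁺ ∈ [0,1] and γ₁⁻ satisfy γ₁ = γ₁·γ₁⁺ + (1−γ₁)·γ₁⁻, and suppose γ₂ > γ₁⁻. Let f : {0,1}² → ℝ with f(0,0) = 0 and f(1,1) ≥ f(1,0). Define A = γ₂·γ₁·f(1,1) + γ₂·(1−γ₁)·f(1,0) + (1−γ₂)·γ₁·f(0,1) and B = γ₁·(γ₁⁺·f(1,1) + (1−γ₁⁺)·f(1,0)) + (1−γ₁)·γ₂·f(0,1). Then B − A = (γ₁−γ₂)·(f(1,0) − f(0,1)) + γ₁·(γ₁⁺−γ₂)·(f(1,1) − f(1,0)) ≥ (γ₁−γ₂)·(f(1,1) − f(0,1)). -/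
theorem stmt_16 (γ₁ γ₂ γ₁p γ₁m : ℝ) (f : Bool → Bool → ℝ)
    (hγ₁ : γ₁ ∈ Set.Ioo (0 : ℝ) 1) (hγ₂ : γ₂ ∈ Set.Ioo (0 : ℝ) 1)
    (h12 : γ₁ > γ₂) (hp : γ₁p ∈ Set.Icc (0 : ℝ) 1)
    (hmart : γ₁ = γ₁ * γ₁p + (1 - γ₁) * γ₁m) (hm2 : γ₂ > γ₁m)
    (hf00 : f false false = 0) (hf11 : f true true ≥ f true false) :
    ((γ₁ * (γ₁p * f true true + (1 - γ₁p) * f true false) + (1 - γ₁) * γ₂ * f false true)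
      - (γ₂ * γ₁ * f true true + γ₂ * (1 - γ₁) * f true false + (1 - γ₂) * γ₁ * f false true)
      = (γ₁ - γ₂) * (f true false - f false true)
        + γ₁ * (γ₁p - γ₂) * (f true true - f true false))
    ∧ (γ₁ * (γ₁p * f true true + (1 - γ₁p) * f true false) + (1 - γ₁) * γ₂ * f false true)
      - (γ₂ * γ₁ * f true true + γ₂ * (1 - γ₁) * f true false + (1 - γ₂) * γ₁ * f false true)
      ≥ (γ₁ - γ₂) * (f true true - f false true) := by
  obtain ⟨h1, h2⟩ := hγ₁
  have key : γ₁ * (γ₁p - γ₂) > γ₁ - γ₂ := by nlinarith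
  constructor
  · ring
  · nlinarith
end
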